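/- Let S ∈ ℝ^{n×m} with S ≠ 0 and ν = min(n,m). Then r(S) = 0 if and only if S has full rank (rank S = ν) and κ(S) = 1, where κ(S) = σ_max(S)/σ_min>0(S). -/

import Mathlib

open Matrix

/-- The Gram matrix `Sᵀ * S` of a real matrix is Hermitian (symmetric). -/
theorem gram_isHermitian {n m : ℕ} (S : Matrix (Fin n) (Fin m) ℝ) :
    (Sᵀ * S).IsHermitian := by
  simpa [Matrix.conjTranspose_eq_transpose_of_trivial] using
    Matrix.isHermitian_conjTranspose_mul_self S

/-- The singular values of a real `n × m` matrix `S`, in nonincreasing order: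
the nonnegative square roots of the `min n m` largest eigenvalues of `Sᵀ * S`. -/
noncomputable def svals {n m : ℕ} (S : Matrix (Fin n) (Fin m) ℝ) :
    Fin (min n m) → ℝ := fun i =>
  Real.sqrt (((gram_isHermitian S).eigenvalues ∘
    Tuple.sort (gram_isHermitian S).eigenvalues)
      ⟨m - 1 - i, by have := i.isLt; omega⟩)

/-- The operator norm of a matrix induced by the Euclidean norms. -/
noncomputable def opNorm {n m : ℕ} (S : Matrix (Fin n) (Fin m) ℝ) : ℝ :=
  ‖LinearMap.toContinuousLinearMap (Matrix.toEuclideanLin S)‖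

/-- The Frobenius norm of a matrix. -/
noncomputable def frobNorm {n m : ℕ} (S : Matrix (Fin n) (Fin m) ℝ) : ℝ :=
  Real.sqrt (∑ i, ∑ j, (S i j) ^ 2)

/-- The regularizer `r(S) = (1/2)‖S‖₂² − (1/(2ν))‖S‖_F²` with `ν = min n m`. -/
noncomputable def reg {n m : ℕ} (S : Matrix (Fin n) (Fin m) ℝ) : ℝ :=
  (1 / 2) * opNorm S ^ 2 - (1 / (2 * (min n m : ℝ))) * frobNorm S ^ 2

/-- The largest singular value of `S`. -/
noncomputable def sigmaMax {n m : ℕ} (S : Matrix (Fin n) (Fin m) ℝ) : ℝ :=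
  ⨆ i, svals S i

/-- The smallest nonzero singular value of `S`. -/
noncomputable def sigmaMinPos {n m : ℕ} (S : Matrix (Fin n) (Fin m) ℝ) : ℝ :=
  sInf {x | (∃ i, svals S i = x) ∧ 0 < x}

/-- The condition number `κ(S) = σ_max(S) / σ_min>0(S)`. -/
noncomputable def kappa {n m : ℕ} (S : Matrix (Fin n) (Fin m) ℝ) : ℝ :=
  sigmaMax S / sigmaMinPos S

/-- The rectangular diagonal `n × m` matrix with diagonal entries `d`. -/
noncomputable def diagRect {n m : ℕ} (d : Fin (min n m) → ℝ) :
    Matrix (Fin n) (Fin m) ℝ := Matrix.of fun i j =>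
  if h : (i : ℕ) = (j : ℕ) then
    d ⟨i, by have := i.isLt; have := j.isLt; omega⟩ else 0

/-! Write `σ₁ ≥ ⋯ ≥ σ_ν` for the singular values and `λ₁ ≥ ⋯ ≥ λ_m ≥ 0` for the eigenvalues of
`SᵀS`. Unitary invariance of the `ℓ²` operator norm and the C⋆-identity give
`‖S‖₂² = ‖SᵀS‖₂ = λ₁ = σ₁²`, and `‖S‖_F² = tr (SᵀS) = ∑ λⱼ = ∑ σᵢ²`, because `SᵀS` has rank at
most `ν`, so that `λⱼ = 0` for `j > ν`. Hence `2ν r(S) = ∑ᵢ (σ₁² − σᵢ²)` is a sum of nonnegative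
terms, and `r(S) = 0` iff all `σᵢ` equal `σ₁ > 0`: none vanishes (full rank) and the smallest
positive one equals the largest (`κ(S) = 1`). -/

open Finset
open scoped Matrix.Norms.L2Operator

theorem Matrix.IsHermitian.l2_opNorm_eq_norm_eigenvalues {𝕜 ι : Type*} [RCLike 𝕜] [Fintype ι]
    [DecidableEq ι] {A : Matrix ι ι 𝕜} (hA : A.IsHermitian) : ‖A‖ = ‖hA.eigenvalues‖ := by
  conv_lhs => rw [hA.spectral_theorem]
  rw [Unitary.conjStarAlgAut_apply, ← Unitary.coe_star, CStarRing.norm_mul_coe_unitary,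
    CStarRing.norm_coe_unitary_mul, l2_opNorm_diagonal]
  simp [Pi.norm_def]

theorem Fin.sum_castLE_eq_sum_of_eq_zero {M : Type*} [AddCommMonoid M] {k m : ℕ} (h : k ≤ m)
    {f : Fin m → M} (hf : ∀ j : Fin m, k ≤ (j : ℕ) → f j = 0) :
    ∑ i : Fin k, f (Fin.castLE h i) = ∑ j, f j := by
  refine (sum_map univ (Fin.castLEEmb h) f).symm.trans <|
    sum_subset (subset_univ _) fun j _ hj => hf j ?_
  by_contra! hjk
  exact hj (mem_map.mpr ⟨⟨j, hjk⟩, mem_univ _, rfl⟩)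

theorem Antitone.eq_zero_of_card_ne_zero_le {α : Type*} [PartialOrder α] [Zero α]
    [DecidableEq α] {m k : ℕ} {g : Fin m → α} (hg : Antitone g) (hg0 : ∀ j, 0 ≤ g j)
    (hcard : #{j | g j ≠ 0} ≤ k) (j : Fin m) (hj : k ≤ (j : ℕ)) : g j = 0 := by
  by_contra hgj
  have hsub : Iic j ⊆ ({i | g i ≠ 0} : Finset (Fin m)) := fun i hi => by
    simp only [mem_filter, mem_univ, true_and]
    exact ((hg0 j).lt_of_ne (Ne.symm hgj)).trans_le (hg (mem_Iic.mp hi)) |>.ne'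
  have hcard_Iic := (card_le_card hsub).trans hcard
  simp only [Fin.card_Iic] at hcard_Iic
  omega

theorem Finset.sum_sq_eq_card_mul_sq_iff {ι R : Type*} [Fintype ι] [CommRing R] [LinearOrder R]
    [IsStrictOrderedRing R] {σ : ι → R} {M : R}
    (h0 : ∀ i, 0 ≤ σ i) (hM : ∀ i, σ i ≤ M) :
    ∑ i, σ i ^ 2 = Fintype.card ι * M ^ 2 ↔ ∀ i, σ i = M := by
  have hgap : Fintype.card ι * M ^ 2 - ∑ i, σ i ^ 2 = ∑ i, (M ^ 2 - σ i ^ 2) := by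
    simp [sum_sub_distrib]
  rw [eq_comm, ← sub_eq_zero, hgap, sum_eq_zero_iff_of_nonneg fun i _ =>
    sub_nonneg.mpr (pow_le_pow_left₀ (h0 i) (hM i) 2)]
  simp only [mem_univ, true_implies, sub_eq_zero]
  exact forall_congr' fun i => ⟨fun h => (pow_left_inj₀ (h0 i) ((h0 i).trans (hM i))
    two_ne_zero).mp h.symm, fun h => h ▸ rfl⟩

theorem forall_eq_iSup_iff_forall_ne_zero_and_iSup_div_sInf_eq_one {ι : Type*} [Finite ι]
    [Nonempty ι] {σ : ι → ℝ} (h0 : ∀ i, 0 ≤ σ i) (hM : 0 < ⨆ i, σ i) :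
    (∀ i, σ i = ⨆ j, σ j) ↔
      (∀ i, σ i ≠ 0) ∧ (⨆ i, σ i) / sInf {x | (∃ i, σ i = x) ∧ 0 < x} = 1 := by
  constructor
  · intro h
    have hvalues : {x | (∃ i, σ i = x) ∧ 0 < x} = {⨆ j, σ j} := by
      ext x
      constructor
      · rintro ⟨⟨i, rfl⟩, -⟩
        exact h i
      · rintro rfl
        exact ⟨⟨Classical.arbitrary ι, h _⟩, hM⟩
    exact ⟨fun i => h i ▸ hM.ne', by rw [hvalues, csInf_singleton, div_self hM.ne']⟩
  · rintro ⟨hne, hκ⟩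
    have hpos (i) : 0 < σ i := (h0 i).lt_of_ne (hne i).symm
    obtain ⟨i₀, hi₀⟩ := Finite.exists_min σ
    have hmin : sInf {x | (∃ i, σ i = x) ∧ 0 < x} = σ i₀ :=
      IsLeast.csInf_eq ⟨⟨⟨i₀, rfl⟩, hpos i₀⟩, by rintro _ ⟨⟨i, rfl⟩, -⟩; exact hi₀ i⟩
    rw [hmin, div_eq_one_iff_eq (hpos i₀).ne'] at hκ
    exact fun i => le_antisymm (le_ciSup (Finite.bddAbove_range σ) i) (hκ ▸ hi₀ i)

noncomputable def sortedGramEigenvalues {n m : ℕ} (S : Matrix (Fin n) (Fin m) ℝ) : Fin m → ℝ :=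
  (gram_isHermitian S).eigenvalues ∘ Tuple.sort (gram_isHermitian S).eigenvalues ∘ Fin.rev

section SortedGramEigenvalues

variable {n m : ℕ} (S : Matrix (Fin n) (Fin m) ℝ)

theorem sortedGramEigenvalues_eq_comp : sortedGramEigenvalues S = (gram_isHermitian S).eigenvalues ∘
    Fin.revPerm.trans (Tuple.sort (gram_isHermitian S).eigenvalues) :=
  rfl

theorem sortedGramEigenvalues_antitone : Antitone (sortedGramEigenvalues S) :=
  (Tuple.monotone_sort (gram_isHermitian S).eigenvalues).comp_antitone Fin.rev_anti

theorem sortedGramEigenvalues_nonneg (j : Fin m) : 0 ≤ sortedGramEigenvalues S j :=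
  Matrix.eigenvalues_conjTranspose_mul_self_nonneg S _

theorem svals_eq_sqrt_sortedGramEigenvalues (i : Fin (min n m)) :
    svals S i = √(sortedGramEigenvalues S (Fin.castLE (min_le_right n m) i)) := by
  simp only [svals, sortedGramEigenvalues, Function.comp_apply]
  congr 3
  rw [Fin.ext_iff]
  simp only [Fin.val_rev, Fin.val_castLE]
  omega

theorem sum_sortedGramEigenvalues : ∑ j, sortedGramEigenvalues S j = frobNorm S ^ 2 := by
  have htrace : (Sᵀ * S).trace = ∑ j, (gram_isHermitian S).eigenvalues j := by
    simpa using (gram_isHermitian S).trace_eq_sum_eigenvalues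
  rw [sortedGramEigenvalues_eq_comp]
  simp only [Function.comp_apply]
  rw [Equiv.sum_comp _ (gram_isHermitian S).eigenvalues, ← htrace, frobNorm,
    Real.sq_sqrt (by positivity), sum_comm]
  simp [trace, mul_apply, sq]

theorem rank_eq_card_sortedGramEigenvalues_ne_zero :
    S.rank = #{j | sortedGramEigenvalues S j ≠ 0} := by
  rw [← rank_transpose_mul_self, (gram_isHermitian S).rank_eq_card_non_zero_eigs,
    ← Fintype.card_subtype, sortedGramEigenvalues_eq_comp]
  exact (Fintype.card_congr (Equiv.subtypeEquiv _ fun _ => Iff.rfl)).symm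

theorem opNorm_sq_eq_sortedGramEigenvalues_zero [NeZero m] :
    opNorm S ^ 2 = sortedGramEigenvalues S 0 := by
  have hgram : opNorm S ^ 2 = ‖(gram_isHermitian S).eigenvalues‖ := by
    rw [sq, ← (gram_isHermitian S).l2_opNorm_eq_norm_eigenvalues,
      ← conjTranspose_eq_transpose_of_trivial]
    exact (l2_opNorm_conjTranspose_mul_self S).symm
  rw [hgram]
  refine le_antisymm ((pi_norm_le_iff_of_nonneg (sortedGramEigenvalues_nonneg S 0)).mpr
    fun i => ?_) ((le_abs_self _).trans (norm_le_pi_norm (gram_isHermitian S).eigenvalues _))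
  obtain ⟨j, rfl⟩ :=
    (Fin.revPerm.trans (Tuple.sort (gram_isHermitian S).eigenvalues)).surjective i
  exact (Real.norm_of_nonneg (sortedGramEigenvalues_nonneg S j)).trans_le
    (sortedGramEigenvalues_antitone S (Fin.zero_le j))

end SortedGramEigenvalues

section SingularValues

variable {n m : ℕ} (S : Matrix (Fin n) (Fin m) ℝ)

theorem svals_nonneg (i : Fin (min n m)) : 0 ≤ svals S i := Real.sqrt_nonneg _

theorem svals_antitone : Antitone (svals S) := fun i j hij => by
  rw [svals_eq_sqrt_sortedGramEigenvalues, svals_eq_sqrt_sortedGramEigenvalues]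
  exact Real.sqrt_le_sqrt (sortedGramEigenvalues_antitone S hij)

theorem sortedGramEigenvalues_eq_zero_of_min_le (j : Fin m) (hj : min n m ≤ (j : ℕ)) :
    sortedGramEigenvalues S j = 0 := by
  refine (sortedGramEigenvalues_antitone S).eq_zero_of_card_ne_zero_le
    (sortedGramEigenvalues_nonneg S) ?_ j hj
  rw [← rank_eq_card_sortedGramEigenvalues_ne_zero]
  exact le_min (by simpa using S.rank_le_card_height) (by simpa using S.rank_le_card_width)

theorem sum_svals_sq : ∑ i, svals S i ^ 2 = frobNorm S ^ 2 := by
  simp only [svals_eq_sqrt_sortedGramEigenvalues, Real.sq_sqrt (sortedGramEigenvalues_nonneg S _)]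
  rw [Fin.sum_castLE_eq_sum_of_eq_zero _ (sortedGramEigenvalues_eq_zero_of_min_le S),
    sum_sortedGramEigenvalues]

theorem rank_eq_card_svals_ne_zero : S.rank = #{i | svals S i ≠ 0} := by
  have hsvals (i) : svals S i ≠ 0 ↔
      sortedGramEigenvalues S (Fin.castLE (min_le_right n m) i) ≠ 0 := by
    rw [svals_eq_sqrt_sortedGramEigenvalues, Real.sqrt_ne_zero (sortedGramEigenvalues_nonneg S _)]
  simp only [rank_eq_card_sortedGramEigenvalues_ne_zero, card_filter, hsvals]
  exact (Fin.sum_castLE_eq_sum_of_eq_zero _ fun j hj => by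
    simp [sortedGramEigenvalues_eq_zero_of_min_le S j hj]).symm

theorem rank_eq_min_iff_forall_svals_ne_zero : S.rank = min n m ↔ ∀ i, svals S i ≠ 0 := by
  rw [rank_eq_card_svals_ne_zero]
  simpa using card_filter_eq_iff (s := univ) (p := fun i => svals S i ≠ 0)

theorem sigmaMax_eq_svals_zero (hν : 0 < min n m) : sigmaMax S = svals S ⟨0, hν⟩ :=
  have : Nonempty (Fin (min n m)) := ⟨⟨0, hν⟩⟩
  le_antisymm (ciSup_le fun i => svals_antitone S (Nat.zero_le i))
    (le_ciSup (Finite.bddAbove_range _) _)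

theorem opNorm_eq_sigmaMax (hν : 0 < min n m) : opNorm S = sigmaMax S := by
  have : NeZero m := ⟨by omega⟩
  have h0 : Fin.castLE (min_le_right n m) ⟨0, hν⟩ = 0 := Fin.ext (by simp)
  rw [sigmaMax_eq_svals_zero S hν, svals_eq_sqrt_sortedGramEigenvalues, h0,
    ← opNorm_sq_eq_sortedGramEigenvalues_zero]
  exact (Real.sqrt_sq (norm_nonneg _)).symm

theorem min_dim_pos_of_ne_zero (hS : S ≠ 0) : 0 < min n m := by
  by_contra! h
  obtain rfl | rfl := Nat.min_eq_zero_iff.mp (Nat.le_zero.mp h) <;>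
    exact hS (Subsingleton.elim _ _)

theorem sigmaMax_pos (hS : S ≠ 0) : 0 < sigmaMax S := by
  rw [← opNorm_eq_sigmaMax S (min_dim_pos_of_ne_zero S hS)]
  exact (norm_pos_iff.mpr hS : 0 < ‖S‖)

theorem reg_eq_zero_iff_forall_svals_eq_sigmaMax (hν : 0 < min n m) :
    reg S = 0 ↔ ∀ i, svals S i = sigmaMax S := by
  have hν' : (0 : ℝ) < min (n : ℝ) m := by exact_mod_cast hν
  have hreg :
      2 * (min n m : ℕ) * reg S = (min n m : ℕ) * sigmaMax S ^ 2 - ∑ i, svals S i ^ 2 := by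
    rw [reg, opNorm_eq_sigmaMax S hν, sum_svals_sq, Nat.cast_min]
    field_simp
  rw [← mul_eq_zero_iff_left (by positivity : 2 * ((min n m : ℕ) : ℝ) ≠ 0), hreg, sub_eq_zero,
    eq_comm]
  simpa using Finset.sum_sq_eq_card_mul_sq_iff (M := sigmaMax S) (svals_nonneg S)
    fun i => le_ciSup (Finite.bddAbove_range (svals S)) i

end SingularValues

/-- Let `S ∈ ℝ^{n×m}` with `S ≠ 0` and `ν = min n m`. Then `r(S) = 0`
if and only if `S` has full rank (`rank S = ν`) and `κ(S) = 1`, where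
`κ(S) = σ_max(S) / σ_min>0(S)`. -/
theorem reg_eq_zero_iff_fullRank_and_kappa_one {n m : ℕ}
    (S : Matrix (Fin n) (Fin m) ℝ) (hS : S ≠ 0) :
    reg S = 0 ↔ (S.rank = min n m ∧ kappa S = 1) := by
  have hν := min_dim_pos_of_ne_zero S hS
  have : Nonempty (Fin (min n m)) := ⟨⟨0, hν⟩⟩
  rw [reg_eq_zero_iff_forall_svals_eq_sigmaMax S hν, rank_eq_min_iff_forall_svals_ne_zero]
  exact forall_eq_iSup_iff_forall_ne_zero_and_iSup_div_sInf_eq_one (svals_nonneg S)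
    (sigmaMax_pos S hS)
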